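/- Deterministic NPG regret framework (Lemma 7 of the paper, before taking expectation over the algorithm's randomness): Assume the parametrized policy class satisfies, for all θ, θ₁, θ₂ and all (s,a): ‖∇_θ log π_θ(a|s)‖₂ ≤ G and ‖∇_θ log π_{θ₁}(a|s) − ∇_θ log π_{θ₂}(a|s)‖₂ ≤ M‖θ₁−θ₂‖₂. Let π⋆ be any policy, η > 0, K ≥ 1, and let θ^0,…,θ^K ∈ ℝ^d, λ^0,…,λ^{K−1} ∈ ℝ^I with λ^k_i ≥ 0, and ω^0,…,ω^{K−1}, ω_*^0,…,ω_*^{K−1} ∈ ℝ^d be sequences with θ^{k+1} = θ^k + η ω^k for every k. Suppose the transferred function approximation error satisfies, for every k, ∑_s d_ρ^{π⋆}(s) ∑_a π⋆(a|s) ( (1−γ)∇_θ log π_{θ^k}(a|s)·ω_*^k − A_{L,λ^k}^{π_{θ^k}}(s,a) )² ≤ ε_bias. Then (1/K) ∑_{k=0}^{K−1} ( J_L(π⋆,λ^k) − J_L(π_{θ^k},λ^k) ) ≤ √ε_bias/(1−γ) + (Mη/(2K)) ∑_{k=0}^{K−1} ‖ω^k‖₂² + (G/K) ∑_{k=0}^{K−1}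 ‖ω^k − ω_*^k‖₂ + (1/(ηK)) ∑_s d_ρ^{π⋆}(s) ( KL(π⋆(·|s) ‖ π_{θ^0}(·|s)) − KL(π⋆(·|s) ‖ π_{θ^K}(·|s)) ). -/

import Mathlib

open scoped BigOperators
open Matrix

noncomputable section

/-- State-transition matrix `P_π(s,s') = ∑_a π(a|s) P(s'|s,a)` induced by policy `π`. -/
def Pmat {S A : Type*} [Fintype A] (P : S → A → S → ℝ) (π : S → A → ℝ) : Matrix S S ℝ :=
  Matrix.of fun s s' => ∑ a, π s a * P s a s'

/-- Discounted state-action occupancy measure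
`d_ρ^π(s,a) = (1-γ) ∑ₜ γ^t (ρᵀ P_π^t)(s) π(a|s)`. -/
def occupancy {S A : Type*} [Fintype S] [DecidableEq S] [Fintype A]
    (P : S → A → S → ℝ) (γ : ℝ) (ρ : S → ℝ) (π : S → A → ℝ) (s : S) (a : A) : ℝ :=
  (1 - γ) * (∑' t : ℕ, γ ^ t * Matrix.vecMul ρ (Pmat P π ^ t) s) * π s a

/-- Value vector `V_h^π = ∑ₜ γ^t P_π^t h_π` where `h_π(s) = ∑_a π(a|s) h(s,a)`. -/
def Vvec {S A : Type*} [Fintype S] [DecidableEq S] [Fintype A]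
    (P : S → A → S → ℝ) (γ : ℝ) (h : S → A → ℝ) (π : S → A → ℝ) : S → ℝ :=
  ∑' t : ℕ, γ ^ t • (Pmat P π ^ t).mulVec (fun s => ∑ a, π s a * h s a)

/-- Scalar value `J_h(π) = ∑_s ρ(s) V_h^π(s)`. -/
def Jval {S A : Type*} [Fintype S] [DecidableEq S] [Fintype A]
    (P : S → A → S → ℝ) (γ : ℝ) (ρ : S → ℝ) (h : S → A → ℝ) (π : S → A → ℝ) : ℝ :=
  ∑ s, ρ s * Vvec P γ h π s

/-- State-action value `Q_h^π(s,a) = h(s,a) + γ ∑_{s'} P(s'|s,a) V_h^π(s')`. -/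
def Qfun {S A : Type*} [Fintype S] [DecidableEq S] [Fintype A]
    (P : S → A → S → ℝ) (γ : ℝ) (h : S → A → ℝ) (π : S → A → ℝ) (s : S) (a : A) : ℝ :=
  h s a + γ * ∑ s', P s a s' * Vvec P γ h π s'

/-- Advantage `A_h^π(s,a) = Q_h^π(s,a) - V_h^π(s)`. -/
def Afun {S A : Type*} [Fintype S] [DecidableEq S] [Fintype A]
    (P : S → A → S → ℝ) (γ : ℝ) (h : S → A → ℝ) (π : S → A → ℝ) (s : S) (a : A) : ℝ :=
  Qfun P γ h π s a - Vvec P γ h π s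

/-- Gradient of the log-policy (score function) at parameter `θ`. -/
def gradLog {S A : Type*} {d : ℕ} (pc : EuclideanSpace ℝ (Fin d) → S → A → ℝ)
    (θ : EuclideanSpace ℝ (Fin d)) (s : S) (a : A) : EuclideanSpace ℝ (Fin d) :=
  gradient (fun θ' => Real.log (pc θ' s a)) θ

/-- State occupancy `d_ρ^π(s) = ∑_a d_ρ^π(s,a)`. -/
def dstate {S A : Type*} [Fintype S] [DecidableEq S] [Fintype A]
    (P : S → A → S → ℝ) (γ : ℝ) (ρ : S → ℝ) (π : S → A → ℝ) (s : S) : ℝ :=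
  ∑ a, occupancy P γ ρ π s a

/-- Lagrangian value `J_L(π,λ) = J_r(π) + ∑ᵢ λᵢ J_{gⁱ}(π)`. -/
def JLag {S A : Type*} [Fintype S] [DecidableEq S] [Fintype A] {I : ℕ}
    (P : S → A → S → ℝ) (γ : ℝ) (ρ : S → ℝ) (r : S → A → ℝ) (g : Fin I → S → A → ℝ)
    (lam : Fin I → ℝ) (π : S → A → ℝ) : ℝ :=
  Jval P γ ρ r π + ∑ i, lam i * Jval P γ ρ (g i) π

/-- Lagrangian advantage `A_{L,λ}^π = A_r^π + ∑ᵢ λᵢ A_{gⁱ}^π`. -/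
def ALag {S A : Type*} [Fintype S] [DecidableEq S] [Fintype A] {I : ℕ}
    (P : S → A → S → ℝ) (γ : ℝ) (r : S → A → ℝ) (g : Fin I → S → A → ℝ)
    (lam : Fin I → ℝ) (π : S → A → ℝ) (s : S) (a : A) : ℝ :=
  Afun P γ r π s a + ∑ i, lam i * Afun P γ (g i) π s a

/-- Kullback–Leibler divergence `KL(p‖q) = ∑_a p(a) log (p(a)/q(a))`. -/
def KLdiv {A : Type*} [Fintype A] (p q : A → ℝ) : ℝ :=
  ∑ a, p a * Real.log (p a / q a)

/-!
By the performance difference lemma, the Lagrangian regret of `π_θ` against `π⋆` is `(1 - γ)⁻¹`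
times the `d_ρ^{π⋆} ⊗ π⋆`-average of the Lagrangian advantage of `π_θ`. Write this advantage as
`(1 - γ) ⟪∇ log π_θ, ω_*⟫` minus the approximation error: by Jensen the error averages to at most
`√ε_bias`, `⟪∇ log π_θ, ω_* - ω⟫ ≤ G ‖ω - ω_*‖`, and by the descent lemma for the `M`-smooth
`log π_θ`, `η ⟪∇ log π_θ, ω⟫` is at most the increase of `log π_θ` along the step plus
`M η² ‖ω‖² / 2`. Averaged against `π⋆`, that increase is the decrease of `KL(π⋆ ‖ π_θ)`, which
telescopes over the iterations.
-/

open Finset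
open scoped RealInnerProductSpace

namespace Matrix

variable {n : Type*} [Fintype n] [DecidableEq n] {Q : Matrix n n ℝ} {γ : ℝ}

theorem norm_mulVec_le_of_mem_rowStochastic (hQ : Q ∈ rowStochastic ℝ n) (u : n → ℝ) :
    ‖Q *ᵥ u‖ ≤ ‖u‖ := by
  refine (pi_norm_le_iff_of_nonneg (norm_nonneg u)).2 fun i => ?_
  calc ‖(Q *ᵥ u) i‖ ≤ ∑ j, Q i j * ‖u‖ := by
        refine (norm_sum_le _ _).trans (sum_le_sum fun j _ => ?_)
        rw [norm_mul, Real.norm_of_nonneg (hQ.1 i j)]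
        exact mul_le_mul_of_nonneg_left (norm_le_pi_norm u j) (hQ.1 i j)
    _ = ‖u‖ := by rw [← sum_mul, sum_row_of_mem_rowStochastic hQ, one_mul]

theorem summable_geom_smul_pow_mulVec (hQ : Q ∈ rowStochastic ℝ n) (hγ0 : 0 ≤ γ) (hγ1 : γ < 1)
    (u : n → ℝ) : Summable fun t : ℕ => γ ^ t • (Q ^ t) *ᵥ u := by
  refine .of_norm_bounded ((summable_geometric_of_lt_one hγ0 hγ1).mul_right ‖u‖) fun t => ?_
  rw [norm_smul, Real.norm_of_nonneg (pow_nonneg hγ0 t)]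
  exact mul_le_mul_of_nonneg_left
    (norm_mulVec_le_of_mem_rowStochastic (pow_mem hQ t) u) (pow_nonneg hγ0 t)

theorem tsum_geom_smul_pow_mulVec_eq_add (hQ : Q ∈ rowStochastic ℝ n) (hγ0 : 0 ≤ γ)
    (hγ1 : γ < 1) (u : n → ℝ) :
    ∑' t : ℕ, γ ^ t • (Q ^ t) *ᵥ u = u + γ • Q *ᵥ ∑' t : ℕ, γ ^ t • (Q ^ t) *ᵥ u := by
  set T := ∑' t : ℕ, γ ^ t • (Q ^ t) *ᵥ u
  have hT := (summable_geom_smul_pow_mulVec hQ hγ0 hγ1 u).hasSum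
  have hshift : HasSum (fun t : ℕ => γ ^ (t + 1) • (Q ^ (t + 1)) *ᵥ u) (γ • Q *ᵥ T) := by
    convert hT.map (γ • Q.mulVecLin) (LinearMap.continuous_of_finiteDimensional _) using 1
    · ext t : 1
      simp [pow_succ', ← mulVec_mulVec, mul_smul]
    · rfl
  have htail := (hasSum_nat_add_iff' 1).2 hT
  rw [sum_range_one, pow_zero, pow_zero, one_mulVec, one_smul] at htail
  rw [hshift.unique htail]
  abel

theorem eq_tsum_geom_smul_pow_mulVec (hQ : Q ∈ rowStochastic ℝ n) (hγ0 : 0 ≤ γ) (hγ1 : γ < 1)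
    {u x : n → ℝ} (hx : x = u + γ • Q *ᵥ x) : x = ∑' t : ℕ, γ ^ t • (Q ^ t) *ᵥ u := by
  set T := ∑' t : ℕ, γ ^ t • (Q ^ t) *ᵥ u
  have hT : T = u + γ • Q *ᵥ T := tsum_geom_smul_pow_mulVec_eq_add hQ hγ0 hγ1 u
  have hxT : x - T = γ • Q *ᵥ (x - T) := by
    calc x - T = (u + γ • Q *ᵥ x) - (u + γ • Q *ᵥ T) := by rw [← hx, ← hT]
      _ = γ • Q *ᵥ (x - T) := by rw [mulVec_sub, smul_sub]; abel
  have hcontr : ‖x - T‖ ≤ γ * ‖x - T‖ := by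
    calc ‖x - T‖ = γ * ‖Q *ᵥ (x - T)‖ := by
          rw [← Real.norm_of_nonneg hγ0, ← norm_smul, ← hxT]
      _ ≤ γ * ‖x - T‖ :=
          mul_le_mul_of_nonneg_left (norm_mulVec_le_of_mem_rowStochastic hQ _) hγ0
  have : ‖x - T‖ = 0 := by nlinarith [norm_nonneg (x - T)]
  exact sub_eq_zero.1 (norm_eq_zero.1 this)

theorem sum_vecMul_of_mem_rowStochastic (hQ : Q ∈ rowStochastic ℝ n) (ρ : n → ℝ) :
    ∑ j, (ρ ᵥ* Q) j = ∑ j, ρ j := by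
  rw [← dotProduct_one, ← dotProduct_mulVec, one_vecMul_of_mem_rowStochastic hQ, dotProduct_one]

variable {ρ : n → ℝ}

theorem summable_geom_mul_vecMul_pow (hQ : Q ∈ rowStochastic ℝ n) (hγ0 : 0 ≤ γ) (hγ1 : γ < 1)
    (hρ0 : ∀ i, 0 ≤ ρ i) (hρ1 : ∑ i, ρ i = 1) (j : n) :
    Summable fun t : ℕ => γ ^ t * (ρ ᵥ* Q ^ t) j := by
  have hnonneg : ∀ t i, 0 ≤ (ρ ᵥ* Q ^ t) i :=
    fun t => nonneg_vecMul_of_mem_rowStochastic (pow_mem hQ t) hρ0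
  refine .of_nonneg_of_le (fun t => mul_nonneg (pow_nonneg hγ0 t) (hnonneg t j)) (fun t => ?_)
    (summable_geometric_of_lt_one hγ0 hγ1)
  refine mul_le_of_le_one_right (pow_nonneg hγ0 t) ?_
  calc (ρ ᵥ* Q ^ t) j ≤ ∑ i, (ρ ᵥ* Q ^ t) i := single_le_sum (fun i _ => hnonneg t i) (mem_univ j)
    _ = 1 := by rw [sum_vecMul_of_mem_rowStochastic (pow_mem hQ t), hρ1]

theorem sum_tsum_geom_mul_vecMul_pow (hQ : Q ∈ rowStochastic ℝ n) (hγ0 : 0 ≤ γ) (hγ1 : γ < 1)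
    (hρ0 : ∀ i, 0 ≤ ρ i) (hρ1 : ∑ i, ρ i = 1) :
    ∑ j, ∑' t : ℕ, γ ^ t * (ρ ᵥ* Q ^ t) j = (1 - γ)⁻¹ := by
  rw [← Summable.tsum_finsetSum fun j _ => summable_geom_mul_vecMul_pow hQ hγ0 hγ1 hρ0 hρ1 j]
  simp_rw [← mul_sum, sum_vecMul_of_mem_rowStochastic (pow_mem hQ _), hρ1, mul_one]
  exact tsum_geometric_of_lt_one hγ0 hγ1

theorem dotProduct_tsum_geom_smul_pow_mulVec (hQ : Q ∈ rowStochastic ℝ n) (hγ0 : 0 ≤ γ)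
    (hγ1 : γ < 1) (hρ0 : ∀ i, 0 ≤ ρ i) (hρ1 : ∑ i, ρ i = 1) (b : n → ℝ) :
    ρ ⬝ᵥ ∑' t : ℕ, γ ^ t • (Q ^ t) *ᵥ b = ∑ j, (∑' t : ℕ, γ ^ t * (ρ ᵥ* Q ^ t) j) * b j := by
  have hleft : HasSum (fun t : ℕ => ρ ⬝ᵥ (γ ^ t • (Q ^ t) *ᵥ b))
      (ρ ⬝ᵥ ∑' t : ℕ, γ ^ t • (Q ^ t) *ᵥ b) :=
    hasSum_sum fun i _ =>
      (Pi.hasSum.1 (summable_geom_smul_pow_mulVec hQ hγ0 hγ1 b).hasSum i).mul_left (ρ i)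
  have hright : HasSum (fun t : ℕ => ∑ j, γ ^ t * (ρ ᵥ* Q ^ t) j * b j)
      (∑ j, (∑' t : ℕ, γ ^ t * (ρ ᵥ* Q ^ t) j) * b j) :=
    hasSum_sum fun j _ => (summable_geom_mul_vecMul_pow hQ hγ0 hγ1 hρ0 hρ1 j).hasSum.mul_right _
  refine hleft.unique (hright.congr_fun fun t => ?_)
  rw [dotProduct_smul, dotProduct_mulVec, smul_eq_mul, dotProduct, mul_sum]
  simp_rw [mul_assoc]

end Matrix

theorem Pmat_mulVec_apply {S A : Type*} [Fintype S] [Fintype A] (P : S → A → S → ℝ)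
    (π : S → A → ℝ) (v : S → ℝ) (s : S) :
    (Pmat P π *ᵥ v) s = ∑ a, π s a * ∑ s', P s a s' * v s' := by
  simp only [mulVec, dotProduct, Pmat, of_apply, sum_mul, mul_sum, mul_assoc]
  exact sum_comm

section MDP

variable {S A : Type*} [Fintype S] [DecidableEq S] [Fintype A]
  {P : S → A → S → ℝ} {γ : ℝ} {ρ : S → ℝ} {π π' : S → A → ℝ}

theorem Pmat_mem_rowStochastic (hP0 : ∀ s a s', 0 ≤ P s a s') (hP1 : ∀ s a, ∑ s', P s a s' = 1)
    (hπ0 : ∀ s a, 0 ≤ π s a) (hπ1 : ∀ s, ∑ a, π s a = 1) :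
    Pmat P π ∈ rowStochastic ℝ S := by
  refine mem_rowStochastic_iff_sum.2
    ⟨fun s s' => sum_nonneg fun a _ => mul_nonneg (hπ0 s a) (hP0 s a s'), fun s => ?_⟩
  simp only [Pmat, of_apply]
  rw [sum_comm]
  simp_rw [← mul_sum, hP1, mul_one, hπ1]

theorem Vvec_eq_add (hP0 : ∀ s a s', 0 ≤ P s a s') (hP1 : ∀ s a, ∑ s', P s a s' = 1)
    (hγ0 : 0 ≤ γ) (hγ1 : γ < 1) (hπ0 : ∀ s a, 0 ≤ π s a) (hπ1 : ∀ s, ∑ a, π s a = 1)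
    (h : S → A → ℝ) :
    Vvec P γ h π = (fun s => ∑ a, π s a * h s a) + γ • Pmat P π *ᵥ Vvec P γ h π :=
  tsum_geom_smul_pow_mulVec_eq_add (Pmat_mem_rowStochastic hP0 hP1 hπ0 hπ1) hγ0 hγ1 _

theorem dstate_eq (hπ1 : ∀ s, ∑ a, π s a = 1) (s : S) :
    dstate P γ ρ π s = (1 - γ) * ∑' t : ℕ, γ ^ t * (ρ ᵥ* Pmat P π ^ t) s := by
  simp only [dstate, occupancy]
  rw [← mul_sum, hπ1, mul_one]

theorem dstate_nonneg (hP0 : ∀ s a s', 0 ≤ P s a s') (hP1 : ∀ s a, ∑ s', P s a s' = 1)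
    (hγ0 : 0 ≤ γ) (hγ1 : γ ≤ 1) (hρ0 : ∀ s, 0 ≤ ρ s)
    (hπ0 : ∀ s a, 0 ≤ π s a) (hπ1 : ∀ s, ∑ a, π s a = 1) (s : S) :
    0 ≤ dstate P γ ρ π s := by
  rw [dstate_eq hπ1]
  exact mul_nonneg (by linarith) <| tsum_nonneg fun t => mul_nonneg (pow_nonneg hγ0 t) <|
    nonneg_vecMul_of_mem_rowStochastic (pow_mem (Pmat_mem_rowStochastic hP0 hP1 hπ0 hπ1) t)
      hρ0 s

theorem sum_dstate (hP0 : ∀ s a s', 0 ≤ P s a s') (hP1 : ∀ s a, ∑ s', P s a s' = 1)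
    (hγ0 : 0 ≤ γ) (hγ1 : γ < 1) (hρ0 : ∀ s, 0 ≤ ρ s) (hρ1 : ∑ s, ρ s = 1)
    (hπ0 : ∀ s a, 0 ≤ π s a) (hπ1 : ∀ s, ∑ a, π s a = 1) :
    ∑ s, dstate P γ ρ π s = 1 := by
  simp_rw [dstate_eq hπ1]
  rw [← mul_sum, sum_tsum_geom_mul_vecMul_pow (Pmat_mem_rowStochastic hP0 hP1 hπ0 hπ1)
    hγ0 hγ1 hρ0 hρ1, mul_inv_cancel₀ (by linarith)]

theorem sum_mul_Afun (hπ'1 : ∀ s, ∑ a, π' s a = 1) (h : S → A → ℝ) (s : S) :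
    ∑ a, π' s a * Afun P γ h π s a
      = ∑ a, π' s a * h s a + γ * (Pmat P π' *ᵥ Vvec P γ h π) s - Vvec P γ h π s := by
  simp only [Afun, Qfun, Pmat_mulVec_apply, mul_sub, mul_add, sum_sub_distrib, sum_add_distrib,
    mul_sum, ← sum_mul, hπ'1, one_mul]
  congr 2
  refine sum_congr rfl fun a _ => sum_congr rfl fun s' _ => by ring

/-- Performance difference lemma. -/
theorem Jval_sub_Jval (hP0 : ∀ s a s', 0 ≤ P s a s') (hP1 : ∀ s a, ∑ s', P s a s' = 1)
    (hγ0 : 0 ≤ γ) (hγ1 : γ < 1) (hρ0 : ∀ s, 0 ≤ ρ s) (hρ1 : ∑ s, ρ s = 1)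
    (hπ'0 : ∀ s a, 0 ≤ π' s a) (hπ'1 : ∀ s, ∑ a, π' s a = 1) (h : S → A → ℝ) :
    Jval P γ ρ h π' - Jval P γ ρ h π
      = (1 - γ)⁻¹ * ∑ s, dstate P γ ρ π' s * ∑ a, π' s a * Afun P γ h π s a := by
  have hQ := Pmat_mem_rowStochastic hP0 hP1 hπ'0 hπ'1
  set V := Vvec P γ h π
  set b : S → ℝ := fun s => ∑ a, π' s a * Afun P γ h π s a
  have hV' := Vvec_eq_add hP0 hP1 hγ0 hγ1 hπ'0 hπ'1 h
  have hfixed : Vvec P γ h π' - V = b + γ • Pmat P π' *ᵥ (Vvec P γ h π' - V) := by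
    ext s
    have hV's := congr_fun hV' s
    simp only [Pi.add_apply, Pi.sub_apply, Pi.smul_apply, smul_eq_mul, mulVec_sub] at hV's ⊢
    have hb : b s = _ := sum_mul_Afun hπ'1 h s
    linarith
  have hJ : Jval P γ ρ h π' - Jval P γ ρ h π = ρ ⬝ᵥ (Vvec P γ h π' - V) := by
    rw [dotProduct_sub]; rfl
  rw [hJ, eq_tsum_geom_smul_pow_mulVec hQ hγ0 hγ1 hfixed,
    dotProduct_tsum_geom_smul_pow_mulVec hQ hγ0 hγ1 hρ0 hρ1, mul_sum]
  refine sum_congr rfl fun s _ => ?_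
  rw [dstate_eq hπ'1, ← mul_assoc, inv_mul_cancel_left₀ (by linarith)]

theorem JLag_sub_JLag {I : ℕ} (hP0 : ∀ s a s', 0 ≤ P s a s') (hP1 : ∀ s a, ∑ s', P s a s' = 1)
    (hγ0 : 0 ≤ γ) (hγ1 : γ < 1) (hρ0 : ∀ s, 0 ≤ ρ s) (hρ1 : ∑ s, ρ s = 1)
    (hπ'0 : ∀ s a, 0 ≤ π' s a) (hπ'1 : ∀ s, ∑ a, π' s a = 1)
    (r : S → A → ℝ) (g : Fin I → S → A → ℝ) (lam : Fin I → ℝ) :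
    JLag P γ ρ r g lam π' - JLag P γ ρ r g lam π
      = (1 - γ)⁻¹ * ∑ s, dstate P γ ρ π' s * ∑ a, π' s a * ALag P γ r g lam π s a := by
  have hpdl := fun h => Jval_sub_Jval (π := π) hP0 hP1 hγ0 hγ1 hρ0 hρ1 hπ'0 hπ'1 h
  calc JLag P γ ρ r g lam π' - JLag P γ ρ r g lam π
      = (Jval P γ ρ r π' - Jval P γ ρ r π)
          + ∑ i, lam i * (Jval P γ ρ (g i) π' - Jval P γ ρ (g i) π) := by
        simp only [JLag, mul_sub, sum_sub_distrib]; ring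
    _ = _ := by
        simp only [hpdl, ALag, mul_add, mul_sum, sum_add_distrib]
        congr 1
        rw [sum_comm]
        refine sum_congr rfl fun s _ => ?_
        rw [sum_comm]
        exact sum_congr rfl fun a _ => sum_congr rfl fun i _ => by ring

end MDP

section Smooth

variable {E : Type*} [NormedAddCommGroup E] [InnerProductSpace ℝ E] [CompleteSpace E]

/-- The descent lemma for an `M`-smooth function. -/
theorem inner_gradient_le_of_lipschitz {f : E → ℝ} (hf : Differentiable ℝ f) {M : ℝ}
    (hM : ∀ x y, ‖gradient f x - gradient f y‖ ≤ M * ‖x - y‖) (x v : E) :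
    ⟪gradient f x, v⟫ ≤ f (x + v) - f x + M / 2 * ‖v‖ ^ 2 := by
  set φ : ℝ → ℝ := fun t => f (x + t • v) - t * ⟪gradient f x, v⟫ + M / 2 * t ^ 2 * ‖v‖ ^ 2
  have hφ : ∀ t : ℝ, HasDerivAt φ
      (⟪gradient f (x + t • v), v⟫ - ⟪gradient f x, v⟫ + M * t * ‖v‖ ^ 2) t := by
    intro t
    have hline : HasDerivAt (fun t : ℝ => x + t • v) v t := by
      simpa using ((hasDerivAt_id t).smul_const v).const_add x
    have hf' := (hf (x + t • v)).hasFDerivAt.comp_hasDerivAt t hline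
    rw [← inner_gradient_left] at hf'
    have := (hf'.sub ((hasDerivAt_id t).mul_const ⟪gradient f x, v⟫)).add
      (((hasDerivAt_pow 2 t).const_mul (M / 2)).mul_const (‖v‖ ^ 2))
    exact this.congr_deriv (by push_cast; ring)
  have hmono : MonotoneOn φ (Set.Icc 0 1) := by
    refine monotoneOn_of_deriv_nonneg (convex_Icc 0 1)
      (fun t _ => (hφ t).continuousAt.continuousWithinAt)
      (fun t _ => (hφ t).differentiableAt.differentiableWithinAt) fun t ht => ?_
    rw [interior_Icc] at ht
    rw [(hφ t).deriv, ← inner_sub_left]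
    have hlip : ⟪gradient f x - gradient f (x + t • v), v⟫ ≤ M * t * ‖v‖ ^ 2 :=
      calc ⟪gradient f x - gradient f (x + t • v), v⟫
          ≤ ‖gradient f (x + t • v) - gradient f x‖ * ‖v‖ := by
            rw [norm_sub_rev]; exact real_inner_le_norm _ _
        _ ≤ M * ‖(x + t • v) - x‖ * ‖v‖ := mul_le_mul_of_nonneg_right (hM _ _) (norm_nonneg v)
        _ = M * t * ‖v‖ ^ 2 := by
            rw [add_sub_cancel_left, norm_smul, Real.norm_of_nonneg ht.1.le]; ring
    rw [← neg_sub, inner_neg_left]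
    linarith
  have h01 := hmono (Set.left_mem_Icc.2 zero_le_one) (Set.right_mem_Icc.2 zero_le_one) zero_le_one
  simp only [φ, zero_smul, add_zero, one_smul, zero_mul, sub_zero, one_mul, one_pow,
    ne_eq, OfNat.ofNat_ne_zero, not_false_eq_true, zero_pow, mul_zero] at h01
  linarith

end Smooth

theorem KLdiv_sub_KLdiv {A : Type*} [Fintype A] {p q q' : A → ℝ} (hp : ∀ a, 0 ≤ p a)
    (hq : ∀ a, 0 < q a) (hq' : ∀ a, 0 < q' a) :
    KLdiv p q - KLdiv p q' = ∑ a, p a * (Real.log (q' a) - Real.log (q a)) := by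
  rw [KLdiv, KLdiv, ← sum_sub_distrib]
  refine sum_congr rfl fun a _ => ?_
  rcases (hp a).eq_or_lt with h0 | hpos
  · simp [← h0]
  · rw [Real.log_div hpos.ne' (hq a).ne', Real.log_div hpos.ne' (hq' a).ne']
    ring

theorem sum_mul_abs_le_sqrt_sum_mul_sq {ι : Type*} [Fintype ι] {w : ι → ℝ} (hw0 : ∀ i, 0 ≤ w i)
    (hw1 : ∑ i, w i = 1) (x : ι → ℝ) : ∑ i, w i * |x i| ≤ √(∑ i, w i * x i ^ 2) := by
  have hjensen := (convexOn_pow 2).map_sum_le (t := univ) (fun i _ => hw0 i) hw1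
    (fun i _ => abs_nonneg (x i))
  simp only [smul_eq_mul, sq_abs] at hjensen
  exact Real.le_sqrt_of_sq_le hjensen

theorem sum_mul_sum_mul_abs_le_sqrt {S A : Type*} [Fintype S] [Fintype A] {D : S → ℝ}
    (hD0 : ∀ s, 0 ≤ D s) (hD1 : ∑ s, D s = 1) {p : S → A → ℝ} (hp0 : ∀ s a, 0 ≤ p s a)
    (hp1 : ∀ s, ∑ a, p s a = 1) (x : S → A → ℝ) :
    ∑ s, D s * ∑ a, p s a * |x s a| ≤ √(∑ s, D s * ∑ a, p s a * x s a ^ 2) := by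
  have h := sum_mul_abs_le_sqrt_sum_mul_sq (w := fun i : S × A => D i.1 * p i.1 i.2)
    (fun i => mul_nonneg (hD0 i.1) (hp0 i.1 i.2))
    (by simp [Fintype.sum_prod_type, ← mul_sum, hp1, hD1]) fun i => x i.1 i.2
  simpa only [Fintype.sum_prod_type, mul_assoc, ← mul_sum] using h

theorem le_abs_sub_add_inner {E : Type*} [NormedAddCommGroup E] [InnerProductSpace ℝ E]
    {c y G : ℝ} (hc : 0 ≤ c) {φ ω ωstar : E} (hG : ‖φ‖ ≤ G) :
    y ≤ |c * ⟪φ, ωstar⟫ - y| + c * (⟪φ, ω⟫ + G * ‖ω - ωstar‖) := by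
  have hcs : ⟪φ, ωstar⟫ ≤ ⟪φ, ω⟫ + G * ‖ω - ωstar‖ := by
    have := (real_inner_le_norm φ (ωstar - ω)).trans
      (mul_le_mul_of_nonneg_right hG (norm_nonneg _))
    rw [inner_sub_right, norm_sub_rev] at this
    linarith
  nlinarith [neg_le_abs (c * ⟪φ, ωstar⟫ - y), mul_le_mul_of_nonneg_left hcs hc]

section Policy

variable {S A : Type*} {d : ℕ} {pc : EuclideanSpace ℝ (Fin d) → S → A → ℝ}
  {M η : ℝ}

theorem inner_gradLog_le {s : S} {a : A} (hdiff : Differentiable ℝ fun θ => Real.log (pc θ s a))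
    (hM : ∀ θ₁ θ₂, ‖gradLog pc θ₁ s a - gradLog pc θ₂ s a‖ ≤ M * ‖θ₁ - θ₂‖) (hη : 0 < η)
    (θ ω : EuclideanSpace ℝ (Fin d)) :
    ⟪gradLog pc θ s a, ω⟫
      ≤ (Real.log (pc (θ + η • ω) s a) - Real.log (pc θ s a)) / η + M * η / 2 * ‖ω‖ ^ 2 := by
  have h := inner_gradient_le_of_lipschitz hdiff hM θ (η • ω)
  rw [real_inner_smul_right, norm_smul, Real.norm_of_nonneg hη.le] at h
  rw [div_add' _ _ _ hη.ne', le_div_iff₀ hη]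
  change η * ⟪gradLog pc θ s a, ω⟫ ≤ _ at h
  nlinarith

theorem sum_mul_inner_gradLog_le [Fintype A] {s : S} (hpos : ∀ θ a, 0 < pc θ s a)
    (hdiff : ∀ a, Differentiable ℝ fun θ => Real.log (pc θ s a))
    (hM : ∀ θ₁ θ₂ a, ‖gradLog pc θ₁ s a - gradLog pc θ₂ s a‖ ≤ M * ‖θ₁ - θ₂‖) (hη : 0 < η)
    {p : A → ℝ} (hp0 : ∀ a, 0 ≤ p a) (hp1 : ∑ a, p a = 1) (θ ω : EuclideanSpace ℝ (Fin d)) :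
    ∑ a, p a * ⟪gradLog pc θ s a, ω⟫
      ≤ (KLdiv p (pc θ s) - KLdiv p (pc (θ + η • ω) s)) / η + M * η / 2 * ‖ω‖ ^ 2 := by
  calc ∑ a, p a * ⟪gradLog pc θ s a, ω⟫
      ≤ ∑ a, p a * ((Real.log (pc (θ + η • ω) s a) - Real.log (pc θ s a)) / η
          + M * η / 2 * ‖ω‖ ^ 2) :=
        sum_le_sum fun a _ => mul_le_mul_of_nonneg_left
          (inner_gradLog_le (hdiff a) (fun θ₁ θ₂ => hM θ₁ θ₂ a) hη θ ω) (hp0 a)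
    _ = _ := by
        rw [KLdiv_sub_KLdiv hp0 (hpos θ) (hpos _), sum_div]
        simp only [mul_add, sum_add_distrib, ← sum_mul, hp1, one_mul, mul_div_assoc]

theorem sum_mul_sum_mul_le_of_sq_error [Fintype S] [Fintype A] {D : S → ℝ} (hD0 : ∀ s, 0 ≤ D s)
    (hD1 : ∑ s, D s = 1) {p : S → A → ℝ} (hp0 : ∀ s a, 0 ≤ p s a) (hp1 : ∀ s, ∑ a, p s a = 1)
    (hpos : ∀ θ s a, 0 < pc θ s a) (hdiff : ∀ s a, Differentiable ℝ fun θ => Real.log (pc θ s a))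
    {G : ℝ} (hM : ∀ θ₁ θ₂ s a, ‖gradLog pc θ₁ s a - gradLog pc θ₂ s a‖ ≤ M * ‖θ₁ - θ₂‖)
    {γ : ℝ} (hγ1 : γ ≤ 1) (hη : 0 < η) {θ ω ωstar : EuclideanSpace ℝ (Fin d)}
    (hG : ∀ s a, ‖gradLog pc θ s a‖ ≤ G) (Adv : S → A → ℝ) {ε : ℝ}
    (hε : ∑ s, D s * ∑ a, p s a * ((1 - γ) * ⟪gradLog pc θ s a, ωstar⟫ - Adv s a) ^ 2 ≤ ε) :
    ∑ s, D s * ∑ a, p s a * Adv s a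
      ≤ √ε + (1 - γ) * ((∑ s, D s * (KLdiv (p s) (pc θ s) - KLdiv (p s) (pc (θ + η • ω) s))) / η
          + M * η / 2 * ‖ω‖ ^ 2 + G * ‖ω - ωstar‖) := by
  set err : S → A → ℝ := fun s a => (1 - γ) * ⟪gradLog pc θ s a, ωstar⟫ - Adv s a
  set c := G * ‖ω - ωstar‖
  have hγ : 0 ≤ 1 - γ := by linarith
  have hstate : ∀ s, ∑ a, p s a * Adv s a ≤ ∑ a, p s a * |err s a|
      + (1 - γ) * ((KLdiv (p s) (pc θ s) - KLdiv (p s) (pc (θ + η • ω) s)) / η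
          + M * η / 2 * ‖ω‖ ^ 2 + c) := by
    intro s
    calc ∑ a, p s a * Adv s a
        ≤ ∑ a, p s a * (|err s a| + (1 - γ) * (⟪gradLog pc θ s a, ω⟫ + c)) :=
          sum_le_sum fun a _ =>
            mul_le_mul_of_nonneg_left (le_abs_sub_add_inner hγ (hG s a)) (hp0 s a)
      _ = ∑ a, p s a * |err s a| + (1 - γ) * (∑ a, p s a * ⟪gradLog pc θ s a, ω⟫ + c) := by
          simp only [mul_add, sum_add_distrib, mul_left_comm _ (1 - γ), ← mul_sum, ← sum_mul,
            hp1, one_mul]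
      _ ≤ _ := by
          have hKL :=
            sum_mul_inner_gradLog_le (hpos · s) (hdiff s) (hM · · s) hη (hp0 s) (hp1 s) θ ω
          gcongr
  have hjensen : ∑ s, D s * ∑ a, p s a * |err s a| ≤ √ε :=
    (sum_mul_sum_mul_abs_le_sqrt hD0 hD1 hp0 hp1 err).trans (Real.sqrt_le_sqrt hε)
  calc ∑ s, D s * ∑ a, p s a * Adv s a
      ≤ ∑ s, D s * (∑ a, p s a * |err s a|
          + (1 - γ) * ((KLdiv (p s) (pc θ s) - KLdiv (p s) (pc (θ + η • ω) s)) / η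
          + M * η / 2 * ‖ω‖ ^ 2 + c)) :=
        sum_le_sum fun s _ => mul_le_mul_of_nonneg_left (hstate s) (hD0 s)
    _ = ∑ s, D s * ∑ a, p s a * |err s a|
          + (1 - γ) * ((∑ s, D s * (KLdiv (p s) (pc θ s) - KLdiv (p s) (pc (θ + η • ω) s))) / η
          + M * η / 2 * ‖ω‖ ^ 2 + c) := by
        simp only [mul_add, sum_add_distrib, mul_left_comm _ (1 - γ), ← mul_sum, ← sum_mul,
          hD1, one_mul, sum_div, mul_div_assoc]
    _ ≤ _ := by gcongr

theorem JLag_sub_JLag_le [Fintype S] [DecidableEq S] [Fintype A] {I : ℕ} {P : S → A → S → ℝ}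
    (hP0 : ∀ s a s', 0 ≤ P s a s') (hP1 : ∀ s a, ∑ s', P s a s' = 1) {γ : ℝ} (hγ0 : 0 ≤ γ)
    (hγ1 : γ < 1) {ρ : S → ℝ} (hρ0 : ∀ s, 0 ≤ ρ s) (hρ1 : ∑ s, ρ s = 1)
    {πstar : S → A → ℝ} (hstar0 : ∀ s a, 0 ≤ πstar s a) (hstar1 : ∀ s, ∑ a, πstar s a = 1)
    (hpos : ∀ θ s a, 0 < pc θ s a) (hdiff : ∀ s a, Differentiable ℝ fun θ => Real.log (pc θ s a))
    {G : ℝ} (hM : ∀ θ₁ θ₂ s a, ‖gradLog pc θ₁ s a - gradLog pc θ₂ s a‖ ≤ M * ‖θ₁ - θ₂‖)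
    (hη : 0 < η) {θ ω ωstar : EuclideanSpace ℝ (Fin d)} (hG : ∀ s a, ‖gradLog pc θ s a‖ ≤ G)
    (r : S → A → ℝ) (g : Fin I → S → A → ℝ) (lam : Fin I → ℝ) {ε : ℝ}
    (hε : ∑ s, dstate P γ ρ πstar s * ∑ a, πstar s a *
      ((1 - γ) * ⟪gradLog pc θ s a, ωstar⟫ - ALag P γ r g lam (pc θ) s a) ^ 2 ≤ ε) :
    JLag P γ ρ r g lam πstar - JLag P γ ρ r g lam (pc θ)
      ≤ √ε / (1 - γ) + (M * η / 2 * ‖ω‖ ^ 2 + G * ‖ω - ωstar‖)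
        + (∑ s, dstate P γ ρ πstar s * KLdiv (πstar s) (pc θ s)
          - ∑ s, dstate P γ ρ πstar s * KLdiv (πstar s) (pc (θ + η • ω) s)) / η := by
  have hγ : 0 < 1 - γ := by linarith
  have h := sum_mul_sum_mul_le_of_sq_error (ω := ω)
    (dstate_nonneg hP0 hP1 hγ0 hγ1.le hρ0 hstar0 hstar1)
    (sum_dstate hP0 hP1 hγ0 hγ1 hρ0 hρ1 hstar0 hstar1) hstar0 hstar1 hpos hdiff hM hγ1.le hη hG
    _ hε
  rw [JLag_sub_JLag hP0 hP1 hγ0 hγ1 hρ0 hρ1 hstar0 hstar1, ← sum_sub_distrib]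
  simp only [← mul_sub]
  calc (1 - γ)⁻¹ * _ ≤ (1 - γ)⁻¹ * _ := mul_le_mul_of_nonneg_left h (inv_nonneg.2 hγ.le)
    _ = _ := by field_simp; ring

end Policy

theorem average_le_of_le_add_sub {K : ℕ} (hK : 1 ≤ K) {x a F : ℕ → ℝ} {c η : ℝ}
    (h : ∀ k < K, x k ≤ c + a k + (F k - F (k + 1)) / η) :
    (1 / K) * ∑ k ∈ range K, x k ≤ c + (1 / K) * ∑ k ∈ range K, a k + (F 0 - F K) / (η * K) := by
  have hK' : (0 : ℝ) < K := by exact_mod_cast hK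
  calc (1 / K) * ∑ k ∈ range K, x k
      ≤ (1 / K) * ∑ k ∈ range K, (c + a k + (F k - F (k + 1)) / η) := by
        gcongr with k hk
        exact h k (mem_range.1 hk)
    _ = _ := by
        rw [sum_add_distrib, sum_add_distrib, ← sum_div, sum_range_sub', sum_const, card_range,
          nsmul_eq_mul]
        field_simp

theorem stmt17_general {S A : Type*} [Fintype S] [DecidableEq S] [Fintype A]
    {d I : ℕ}
    (P : S → A → S → ℝ) (hP0 : ∀ s a s', 0 ≤ P s a s') (hP1 : ∀ s a, ∑ s', P s a s' = 1)
    (γ : ℝ) (hγ0 : 0 < γ) (hγ1 : γ < 1)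
    (ρ : S → ℝ) (hρ0 : ∀ s, 0 ≤ ρ s) (hρ1 : ∑ s, ρ s = 1)
    (pc : EuclideanSpace ℝ (Fin d) → S → A → ℝ)
    (hpos : ∀ θ s a, 0 < pc θ s a)
    (hdiff : ∀ s a, Differentiable ℝ fun θ => Real.log (pc θ s a))
    (G M : ℝ)
    (hG : ∀ θ s a, ‖gradLog pc θ s a‖ ≤ G)
    (hM : ∀ θ₁ θ₂ s a, ‖gradLog pc θ₁ s a - gradLog pc θ₂ s a‖ ≤ M * ‖θ₁ - θ₂‖)
    (r : S → A → ℝ)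
    (g : Fin I → S → A → ℝ)
    (πstar : S → A → ℝ) (hstar0 : ∀ s a, 0 ≤ πstar s a) (hstar1 : ∀ s, ∑ a, πstar s a = 1)
    (η : ℝ) (hη : 0 < η) (K : ℕ) (hK : 1 ≤ K)
    (θ : ℕ → EuclideanSpace ℝ (Fin d)) (lam : ℕ → Fin I → ℝ)
    (ω ωstar : ℕ → EuclideanSpace ℝ (Fin d))
    (hupd : ∀ k, k < K → θ (k + 1) = θ k + η • ω k)
    (εbias : ℝ)
    (hbias : ∀ k, k < K →
      ∑ s, dstate P γ ρ πstar s * ∑ a, πstar s a *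
        ((1 - γ) * ⟪gradLog pc (θ k) s a, ωstar k⟫ -
          ALag P γ r g (lam k) (pc (θ k)) s a) ^ 2 ≤ εbias) :
    (1 / (K : ℝ)) * ∑ k ∈ Finset.range K,
        (JLag P γ ρ r g (lam k) πstar - JLag P γ ρ r g (lam k) (pc (θ k)))
      ≤ Real.sqrt εbias / (1 - γ)
        + (M * η / (2 * (K : ℝ))) * ∑ k ∈ Finset.range K, ‖ω k‖ ^ 2
        + (G / (K : ℝ)) * ∑ k ∈ Finset.range K, ‖ω k - ωstar k‖
        + (1 / (η * (K : ℝ))) * ∑ s, dstate P γ ρ πstar s *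
            (KLdiv (πstar s) (fun a => pc (θ 0) s a) -
             KLdiv (πstar s) (fun a => pc (θ K) s a)) := by
  set D := dstate P γ ρ πstar
  refine (average_le_of_le_add_sub hK (c := √εbias / (1 - γ)) (η := η)
    (a := fun k => M * η / 2 * ‖ω k‖ ^ 2 + G * ‖ω k - ωstar k‖)
    (F := fun k => ∑ s, D s * KLdiv (πstar s) (pc (θ k) s)) fun k hk => ?_).trans_eq ?_
  · rw [hupd k hk]
    exact JLag_sub_JLag_le hP0 hP1 hγ0.le hγ1 hρ0 hρ1 hstar0 hstar1 hpos hdiff hM hη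
      (hG (θ k)) r g (lam k) (hbias k hk)
  · simp only [sum_add_distrib, ← mul_sum, mul_sub, sum_sub_distrib]
    ring

/-- Lemma 7 of the paper, deterministic form. The NPG regret framework:
under the score bound `G` and score smoothness `M`, for iterates `θ^{k+1} = θ^k + η ω^k`
with nonnegative multipliers `λ^k` and transferred function approximation error at most
`ε_bias`, the averaged Lagrangian regret against any comparator policy `π⋆` is bounded by
`√ε_bias/(1−γ) + (Mη/2K) ∑‖ω^k‖² + (G/K) ∑‖ω^k − ω_*^k‖ + (1/ηK) ∑_s d_ρ^{π⋆}(s)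
(KL(π⋆‖π_{θ⁰}) − KL(π⋆‖π_{θᴷ}))`. -/
theorem stmt17 {S A : Type*} [Fintype S] [DecidableEq S] [Fintype A] [Nonempty S] [Nonempty A]
    {d I : ℕ}
    (P : S → A → S → ℝ) (hP0 : ∀ s a s', 0 ≤ P s a s') (hP1 : ∀ s a, ∑ s', P s a s' = 1)
    (γ : ℝ) (hγ0 : 0 < γ) (hγ1 : γ < 1)
    (ρ : S → ℝ) (hρ0 : ∀ s, 0 ≤ ρ s) (hρ1 : ∑ s, ρ s = 1)
    (pc : EuclideanSpace ℝ (Fin d) → S → A → ℝ)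
    (hpos : ∀ θ s a, 0 < pc θ s a) (hnorm : ∀ θ s, ∑ a, pc θ s a = 1)
    (hdiff : ∀ s a, Differentiable ℝ fun θ => Real.log (pc θ s a))
    (G M : ℝ)
    (hG : ∀ θ s a, ‖gradLog pc θ s a‖ ≤ G)
    (hM : ∀ θ₁ θ₂ s a, ‖gradLog pc θ₁ s a - gradLog pc θ₂ s a‖ ≤ M * ‖θ₁ - θ₂‖)
    (r : S → A → ℝ) (hr : ∀ s a, r s a ∈ Set.Icc (0 : ℝ) 1)
    (g : Fin I → S → A → ℝ) (hg : ∀ i s a, g i s a ∈ Set.Icc (-1 : ℝ) 1)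
    (πstar : S → A → ℝ) (hstar0 : ∀ s a, 0 ≤ πstar s a) (hstar1 : ∀ s, ∑ a, πstar s a = 1)
    (η : ℝ) (hη : 0 < η) (K : ℕ) (hK : 1 ≤ K)
    (θ : ℕ → EuclideanSpace ℝ (Fin d)) (lam : ℕ → Fin I → ℝ)
    (hlam : ∀ k, k < K → ∀ i, 0 ≤ lam k i)
    (ω ωstar : ℕ → EuclideanSpace ℝ (Fin d))
    (hupd : ∀ k, k < K → θ (k + 1) = θ k + η • ω k)
    (εbias : ℝ)
    (hbias : ∀ k, k < K →
      ∑ s, dstate P γ ρ πstar s * ∑ a, πstar s a *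
        ((1 - γ) * ⟪gradLog pc (θ k) s a, ωstar k⟫ -
          ALag P γ r g (lam k) (pc (θ k)) s a) ^ 2 ≤ εbias) :
    (1 / (K : ℝ)) * ∑ k ∈ Finset.range K,
        (JLag P γ ρ r g (lam k) πstar - JLag P γ ρ r g (lam k) (pc (θ k)))
      ≤ Real.sqrt εbias / (1 - γ)
        + (M * η / (2 * (K : ℝ))) * ∑ k ∈ Finset.range K, ‖ω k‖ ^ 2
        + (G / (K : ℝ)) * ∑ k ∈ Finset.range K, ‖ω k - ωstar k‖
        + (1 / (η * (K : ℝ))) * ∑ s, dstate P γ ρ πstar s *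
            (KLdiv (πstar s) (fun a => pc (θ 0) s a) -
             KLdiv (πstar s) (fun a => pc (θ K) s a)) :=
  stmt17_general P hP0 hP1 γ hγ0 hγ1 ρ hρ0 hρ1 pc hpos hdiff G M hG hM r g πstar hstar0 hstar1 η hη
    K hK θ lam ω ωstar hupd εbias hbias
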